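/- arXiv:1910.11532 — 11 statements merged into one kernel-verified Lean document; each statement's English description precedes it below -/
import Mathlib

section
/- A 2×2 real matrix A is semipositive (there exists x > 0 componentwise with Ax > 0 componentwise) if and only if A has a column with both entries positive, or A has one of the forms [[a, -b], [-c, d]] or [[-b, a], [d, -c]] with a > 0, d > 0, b ≥ 0, c ≥ 0, and ad - bc > 0. -/
open Matrix Set

/-- The nonnegative orthant in `ℝ^n`. -/
def posOrth (n : ℕ) : Set (Fin n → ℝ) := {x | ∀ i, 0 ≤ x i}

/-- A proper cone: closed, pointed convex cone with nonempty interior. -/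
def IsProperCone {n : ℕ} (K : Set (Fin n → ℝ)) : Prop :=
  (∀ x ∈ K, ∀ y ∈ K, x + y ∈ K) ∧
  (∀ (c : ℝ), 0 ≤ c → ∀ x ∈ K, c • x ∈ K) ∧
  IsClosed K ∧ K ∩ (-K) = {0} ∧ (interior K).Nonempty

/-- The dual cone of a set in `ℝ^n`. -/
def dualCone {n : ℕ} (K : Set (Fin n → ℝ)) : Set (Fin n → ℝ) :=
  {y | ∀ x ∈ K, 0 ≤ y ⬝ᵥ x}

/-- `(K₁,K₂)`-semipositivity of a matrix. -/
def SemiposCone {n m : ℕ} (K₁ : Set (Fin n → ℝ)) (K₂ : Set (Fin m → ℝ))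
    (A : Matrix (Fin m) (Fin n) ℝ) : Prop :=
  ∃ x ∈ interior K₁, A.mulVec x ∈ interior K₂

/-- Semipositivity with respect to the nonnegative orthants. -/
def Semipos {n m : ℕ} (A : Matrix (Fin m) (Fin n) ℝ) : Prop :=
  ∃ x : Fin n → ℝ, (∀ i, 0 < x i) ∧ ∀ j, 0 < A.mulVec x j

theorem stmt_0 (A : Matrix (Fin 2) (Fin 2) ℝ) :
    Semipos A ↔
      (∃ j, ∀ i, 0 < A i j) ∨
      (∃ a b c d : ℝ, 0 < a ∧ 0 < d ∧ 0 ≤ b ∧ 0 ≤ c ∧ 0 < a * d - b * c ∧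
        (A = !![a, -b; -c, d] ∨ A = !![-b, a; d, -c])) := by
  constructor
  · rintro ⟨x, hx, hAx⟩
    have hx0 := hx 0
    have hx1 := hx 1
    have h0 := hAx 0
    have h1 := hAx 1
    simp [Matrix.mulVec, dotProduct, Fin.sum_univ_two] at h0 h1
    have hA : A = !![A 0 0, A 0 1; A 1 0, A 1 1] := by
      ext i j; fin_cases i <;> fin_cases j <;> rfl
    rcases lt_or_ge 0 (A 0 0) with hp | hp
    · rcases lt_or_ge 0 (A 1 0) with hr | hr
      · exact Or.inl ⟨0, fun i => by fin_cases i <;> assumption⟩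
      · have hs : 0 < A 1 1 := by nlinarith
        rcases lt_or_ge 0 (A 0 1) with hq | hq
        · exact Or.inl ⟨1, fun i => by fin_cases i <;> assumption⟩
        · refine Or.inr ⟨A 0 0, -(A 0 1), -(A 1 0), A 1 1, hp, hs, by linarith, by linarith,
            ?_, Or.inl (by simpa using hA)⟩
          nlinarith [mul_pos h0 (mul_pos hs hx1),
            mul_nonneg h1.le (mul_nonneg (neg_nonneg.2 hq) hx1.le), mul_pos hx0 hx1]
    · have hq : 0 < A 0 1 := by nlinarith
      rcases lt_or_ge 0 (A 1 1) with hs | hs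
      · exact Or.inl ⟨1, fun i => by fin_cases i <;> assumption⟩
      · have hr : 0 < A 1 0 := by nlinarith
        refine Or.inr ⟨A 0 1, -(A 0 0), -(A 1 1), A 1 0, hq, hr, by linarith, by linarith,
          ?_, Or.inr (by simpa using hA)⟩
        nlinarith [mul_pos h0 (mul_pos hr hx0),
          mul_nonneg h1.le (mul_nonneg (neg_nonneg.2 hp) hx0.le), mul_pos hx0 hx1]
  · rintro (⟨j, hj⟩ | ⟨a, b, c, d, ha, hd, hb, hc, habcd, hform⟩)
    · have h0 := hj 0
      have h1 := hj 1
      fin_cases j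
      · set ε := min (A 0 0 / (1 + |A 0 1|)) (A 1 0 / (1 + |A 1 1|)) with hε
        have hd0 : (0:ℝ) < 1 + |A 0 1| := by positivity
        have hd1 : (0:ℝ) < 1 + |A 1 1| := by positivity
        have hεpos : 0 < ε := lt_min (div_pos h0 hd0) (div_pos h1 hd1)
        have hb0 : ε * (1 + |A 0 1|) ≤ A 0 0 := (le_div_iff₀ hd0).1 (min_le_left _ _)
        have hb1 : ε * (1 + |A 1 1|) ≤ A 1 0 := (le_div_iff₀ hd1).1 (min_le_right _ _)
        refine ⟨![1, ε], fun i => by fin_cases i <;> simp [hεpos], fun j => ?_⟩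
        fin_cases j <;>
          simp [Matrix.mulVec, dotProduct, Fin.sum_univ_two]
        · nlinarith [mul_le_mul_of_nonneg_right (neg_abs_le (A 0 1)) hεpos.le]
        · nlinarith [mul_le_mul_of_nonneg_right (neg_abs_le (A 1 1)) hεpos.le]
      · set ε := min (A 0 1 / (1 + |A 0 0|)) (A 1 1 / (1 + |A 1 0|)) with hε
        have hd0 : (0:ℝ) < 1 + |A 0 0| := by positivity
        have hd1 : (0:ℝ) < 1 + |A 1 0| := by positivity
        have hεpos : 0 < ε := lt_min (div_pos h0 hd0) (div_pos h1 hd1)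
        have hb0 : ε * (1 + |A 0 0|) ≤ A 0 1 := (le_div_iff₀ hd0).1 (min_le_left _ _)
        have hb1 : ε * (1 + |A 1 0|) ≤ A 1 1 := (le_div_iff₀ hd1).1 (min_le_right _ _)
        refine ⟨![ε, 1], fun i => by fin_cases i <;> simp [hεpos], fun j => ?_⟩
        fin_cases j <;>
          simp [Matrix.mulVec, dotProduct, Fin.sum_univ_two]
        · nlinarith [mul_le_mul_of_nonneg_right (neg_abs_le (A 0 0)) hεpos.le]
        · nlinarith [mul_le_mul_of_nonneg_right (neg_abs_le (A 1 0)) hεpos.le]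
    · rcases hform with h | h <;> subst h
      · refine ⟨![b + d, a + c], fun i => by fin_cases i <;> simp <;> linarith, fun j => ?_⟩
        fin_cases j <;>
          simp [Matrix.mulVec, dotProduct, Fin.sum_univ_two] <;> nlinarith
      · refine ⟨![a + c, b + d], fun i => by fin_cases i <;> simp <;> linarith, fun j => ?_⟩
        fin_cases j <;>
          simp [Matrix.mulVec, dotProduct, Fin.sum_univ_two] <;> nlinarith
end

section
/- Let K_1 ⊆ ℝ^n, K_2 ⊆ ℝ^m be proper cones and A an m×n real matrix. Exactly one of the following holds: (a) there exists x ∈ K_1 with Ax in the interior of K_2; (b) there exists a nonzero y ∈ K_2^* with −A^t y ∈ K_1^*. -/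
open Matrix Set

theorem stmt_4 {n m : ℕ} (K₁ : Set (Fin n → ℝ)) (K₂ : Set (Fin m → ℝ))
    (hK₁ : IsProperCone K₁) (hK₂ : IsProperCone K₂)
    (A : Matrix (Fin m) (Fin n) ℝ) :
    Xor' (∃ x ∈ K₁, A.mulVec x ∈ interior K₂)
      (∃ y : Fin m → ℝ, y ≠ 0 ∧ y ∈ dualCone K₂ ∧ -(Aᵀ.mulVec y) ∈ dualCone K₁) := by
  obtain ⟨hadd₁, hsmul₁, hcl₁, hpt₁, hint₁⟩ := hK₁
  obtain ⟨hadd₂, hsmul₂, hcl₂, hpt₂, hint₂⟩ := hK₂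
  have h0₁ : (0 : Fin n → ℝ) ∈ K₁ := by
    have h : (0 : Fin n → ℝ) ∈ K₁ ∩ (-K₁) := by rw [hpt₁]; rfl
    exact h.1
  have hconv₁ : Convex ℝ K₁ := fun x hx y hy a b ha hb _ =>
    hadd₁ _ (hsmul₁ a ha x hx) _ (hsmul₁ b hb y hy)
  have hconv₂ : Convex ℝ K₂ := fun x hx y hy a b ha hb _ =>
    hadd₂ _ (hsmul₂ a ha x hx) _ (hsmul₂ b hb y hy)
  -- the two alternatives cannot both hold
  have hnotboth : ¬ ((∃ x ∈ K₁, A.mulVec x ∈ interior K₂) ∧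
      (∃ y : Fin m → ℝ, y ≠ 0 ∧ y ∈ dualCone K₂ ∧ -(Aᵀ.mulVec y) ∈ dualCone K₁)) := by
    rintro ⟨⟨x, hx, hAx⟩, ⟨y, hy0, hyK, hAty⟩⟩
    have h1 : y ⬝ᵥ A.mulVec x ≤ 0 := by
      have h := hAty x hx
      rw [neg_dotProduct, Matrix.mulVec_transpose] at h
      rw [Matrix.dotProduct_mulVec]
      linarith
    set z := A.mulVec x with hz
    -- z ∈ interior K₂, so z - δ • y ∈ K₂ for small δ > 0
    obtain ⟨ε, hε, hball⟩ := Metric.mem_nhds_iff.mp (mem_interior_iff_mem_nhds.mp hAx)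
    have hyn : 0 < ‖y‖ := norm_pos_iff.mpr hy0
    set δ : ℝ := ε / (2 * ‖y‖) with hδdef
    have hδ : 0 < δ := div_pos hε (by positivity)
    have hmem : z - δ • y ∈ K₂ := by
      apply hball
      have : dist (z - δ • y) z = δ * ‖y‖ := by
        rw [dist_eq_norm]
        simp [norm_smul, abs_of_pos hδ]
      rw [Metric.mem_ball, this, hδdef]
      rw [div_mul_eq_mul_div, mul_comm]
      rw [div_lt_iff₀ (by positivity)]
      nlinarith
    have h2 := hyK _ hmem
    rw [dotProduct_sub, dotProduct_smul] at h2
    have hyy : 0 < y ⬝ᵥ y := by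
      rcases lt_or_eq_of_le (Finset.sum_nonneg fun i _ => mul_self_nonneg (y i) :
          (0:ℝ) ≤ y ⬝ᵥ y) with h | h
      · exact h
      · exact absurd (dotProduct_self_eq_zero.mp h.symm) hy0
    have : (0:ℝ) < δ * (y ⬝ᵥ y) := mul_pos hδ hyy
    simp only [smul_eq_mul] at h2
    linarith
  rcases em (∃ x ∈ K₁, A.mulVec x ∈ interior K₂) with ha | ha
  · exact Or.inl ⟨ha, fun hb => hnotboth ⟨ha, hb⟩⟩
  · refine Or.inr ⟨?_, ha⟩
    -- separation
    have hdisj : Disjoint (interior K₂) (A.mulVec '' K₁) := by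
      rw [Set.disjoint_left]
      rintro z hzint ⟨x, hxK, rfl⟩
      exact ha ⟨x, hxK, hzint⟩
    have himg : Convex ℝ (A.mulVec '' K₁) := by
      have h := hconv₁.linear_image A.mulVecLin
      rwa [Matrix.coe_mulVecLin] at h
    obtain ⟨f, u, hfs, hft⟩ :=
      geometric_hahn_banach_open hconv₂.interior isOpen_interior himg hdisj
    have hu0 : u ≤ 0 := by
      have h := hft (A.mulVec 0) ⟨0, h0₁, rfl⟩
      simpa [Matrix.mulVec_zero] using h
    -- translate f into a vector
    set y : Fin m → ℝ := fun i => - f (fun j => if i = j then 1 else 0) with hy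
    have hfy : ∀ z, f z = - (y ⬝ᵥ z) := by
      intro z
      have h := LinearMap.pi_apply_eq_sum_univ (f : (Fin m → ℝ) →ₗ[ℝ] ℝ) z
      simp only [ContinuousLinearMap.coe_coe] at h
      rw [h, dotProduct, ← Finset.sum_neg_distrib]
      exact Finset.sum_congr rfl fun i _ => by simp [hy]; ring
    -- f is nonpositive on K₂
    obtain ⟨w, hw⟩ := hint₂
    have hfw : f w < 0 := lt_of_lt_of_le (hfs w hw) hu0
    have hK₂le : ∀ v ∈ K₂, f v ≤ 0 := by
      intro v hv
      by_contra hpos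
      push_neg at hpos
      set t : ℝ := f v / (f v - f w) with ht
      have hd : 0 < f v - f w := by linarith
      have ht0 : 0 < t := div_pos hpos hd
      have ht1 : t < 1 := (div_lt_one hd).mpr (by linarith)
      have hmem : (1 - t) • v + t • w ∈ interior K₂ :=
        hconv₂.combo_self_interior_mem_interior hv hw (by linarith) ht0 (by ring)
      have hval : f ((1 - t) • v + t • w) = (1 - t) * f v + t * f w := by
        rw [map_add, f.map_smul, f.map_smul]; simp
      have h := hfs _ hmem
      rw [hval] at h
      have hcalc : (1 - t) * f v + t * f w = 0 := by
        rw [ht]; field_simp; ring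
      rw [hcalc] at h
      linarith
    -- y ≠ 0
    have hy0 : y ≠ 0 := by
      intro h
      have : f w = 0 := by rw [hfy w, h]; simp
      linarith
    refine ⟨y, hy0, ?_, ?_⟩
    · intro v hv
      have := hK₂le v hv
      rw [hfy v] at this
      linarith
    · intro x hx
      have hAx : 0 ≤ f (A.mulVec x) := by
        by_contra hneg
        push_neg at hneg
        set t : ℝ := (u - 1) / f (A.mulVec x) with ht
        have ht0 : 0 < t := div_pos_of_neg_of_neg (by linarith) hneg
        have h := hft (A.mulVec (t • x)) ⟨t • x, hsmul₁ t ht0.le x hx, rfl⟩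
        rw [Matrix.mulVec_smul, f.map_smul, smul_eq_mul, ht,
          div_mul_cancel₀ _ (ne_of_lt hneg)] at h
        linarith
      rw [neg_dotProduct, Matrix.mulVec_transpose, ← Matrix.dotProduct_mulVec]
      rw [hfy (A.mulVec x)] at hAx
      linarith
end

section
/- For an m×n real matrix A, exactly one of the following alternatives holds: (a) there exists x ≥ 0 (componentwise) with Ax > 0 (componentwise); (b) there exists 0 ≠ y ≥ 0 with −A^t y ≥ 0. -/
open Matrix Set

section Aux

lemma not_both {n m : ℕ} (A : Matrix (Fin m) (Fin n) ℝ)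
    (ha : ∃ x : Fin n → ℝ, (∀ i, 0 ≤ x i) ∧ ∀ j, 0 < A.mulVec x j)
    (hb : ∃ y : Fin m → ℝ, y ≠ 0 ∧ (∀ j, 0 ≤ y j) ∧ ∀ i, 0 ≤ (-(Aᵀ.mulVec y)) i) :
    False := by
  obtain ⟨x, hx, hAx⟩ := ha
  obtain ⟨y, hy0, hy, hAy⟩ := hb
  have h1 : 0 < y ⬝ᵥ A.mulVec x := by
    obtain ⟨j, hj⟩ := Function.ne_iff.mp hy0
    refine Finset.sum_pos' (fun j _ => mul_nonneg (hy j) (hAx j).le) ⟨j, Finset.mem_univ j, ?_⟩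
    exact mul_pos (lt_of_le_of_ne (hy j) (Ne.symm hj)) (hAx j)
  have h2 : y ⬝ᵥ A.mulVec x ≤ 0 := by
    rw [Matrix.dotProduct_mulVec, ← Matrix.mulVec_transpose]
    refine Finset.sum_nonpos fun i _ => mul_nonpos_of_nonpos_of_nonneg ?_ (hx i)
    have := hAy i
    simpa using this
  exact absurd h1 (not_lt.mpr h2)

lemma alt_of_not {n m : ℕ} (A : Matrix (Fin m) (Fin n) ℝ)
    (ha : ¬ ∃ x : Fin n → ℝ, (∀ i, 0 ≤ x i) ∧ ∀ j, 0 < A.mulVec x j) :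
    ∃ y : Fin m → ℝ, y ≠ 0 ∧ (∀ j, 0 ≤ y j) ∧ ∀ i, 0 ≤ (-(Aᵀ.mulVec y)) i := by
  classical
  set P : Set (Fin m → ℝ) := Set.univ.pi fun _ => Set.Ioi (0:ℝ) with hP
  set C : Set (Fin m → ℝ) :=
    {z | ∃ x s : _, (∀ i, 0 ≤ x i) ∧ (∀ j, 0 ≤ s j) ∧ z = A.mulVec x - s} with hC
  have hPopen : IsOpen P := isOpen_set_pi Set.finite_univ fun _ _ => isOpen_Ioi
  have hPconv : Convex ℝ P := convex_pi fun _ _ => convex_Ioi 0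
  have hCconv : Convex ℝ C := by
    rintro z₁ ⟨x₁, s₁, hx₁, hs₁, rfl⟩ z₂ ⟨x₂, s₂, hx₂, hs₂, rfl⟩ a b haa hbb hab
    refine ⟨a • x₁ + b • x₂, a • s₁ + b • s₂,
      fun i => by simpa using add_nonneg (mul_nonneg haa (hx₁ i)) (mul_nonneg hbb (hx₂ i)),
      fun j => by simpa using add_nonneg (mul_nonneg haa (hs₁ j)) (mul_nonneg hbb (hs₂ j)), ?_⟩
    simp only [Matrix.mulVec_add, Matrix.mulVec_smul]
    module
  have hdisj : Disjoint P C := by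
    rw [Set.disjoint_left]
    rintro z hzP ⟨x, s, hx, hs, rfl⟩
    exact ha ⟨x, hx, fun j => lt_of_lt_of_le (hzP j (Set.mem_univ j))
      (by simpa using hs j)⟩
  obtain ⟨f, u, hfP, hfC⟩ := geometric_hahn_banach_open hPconv hPopen hCconv hdisj
  have h0C : (0 : Fin m → ℝ) ∈ C := ⟨0, 0, fun _ => le_refl 0, fun _ => le_refl 0, by simp⟩
  have hu0 : u ≤ 0 := by simpa using hfC 0 h0C
  -- f is nonnegative on C
  have hfC0 : ∀ c ∈ C, 0 ≤ f c := by
    rintro c ⟨x, s, hx, hs, rfl⟩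
    by_contra hneg
    push_neg at hneg
    set t : ℝ := (u - 1) / f (A.mulVec x - s) with ht
    have htpos : 0 < t := div_pos_of_neg_of_neg (by linarith) hneg
    have htc : t • (A.mulVec x - s) ∈ C := by
      refine ⟨t • x, t • s, fun i => mul_nonneg htpos.le (hx i),
        fun j => mul_nonneg htpos.le (hs j), ?_⟩
      simp only [Matrix.mulVec_smul]
      module
    have := hfC _ htc
    rw [f.map_smul, smul_eq_mul, ht, div_mul_cancel₀ _ (ne_of_lt hneg)] at this
    linarith
  set y : Fin m → ℝ := fun j => -(f (Pi.single j 1)) with hy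
  -- key formula : f z = - (y ⬝ᵥ z)
  have hkey : ∀ z : Fin m → ℝ, f z = -(y ⬝ᵥ z) := by
    intro z
    have hz : z = ∑ j, z j • (Pi.single j 1 : Fin m → ℝ) := by
      funext k
      simp [Finset.sum_apply, Pi.single_apply, mul_comm]
    calc f z = f (∑ j, z j • (Pi.single j 1 : Fin m → ℝ)) := by rw [← hz]
    _ = ∑ j, z j * f (Pi.single j (1:ℝ)) := by rw [map_sum]; simp
    _ = -(y ⬝ᵥ z) := by simp [hy, dotProduct, mul_comm, neg_eq_iff_eq_neg]
  have hones : f (fun _ => (1:ℝ)) < u := hfP _ (fun j _ => Set.mem_Ioi.mpr zero_lt_one)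
  -- y is nonnegative
  have hynn : ∀ j, 0 ≤ y j := by
    intro j
    by_contra hneg
    push_neg at hneg
    have hfj : 0 < f (Pi.single j 1) := by simp only [hy] at hneg; linarith
    set t : ℝ := (u - f (fun _ => (1:ℝ))) / f (Pi.single j 1) with ht
    have htpos : 0 < t := div_pos (by linarith) hfj
    have hzP : ((fun _ => (1:ℝ)) + t • (Pi.single j 1 : Fin m → ℝ)) ∈ P := by
      intro k _
      simp only [Pi.add_apply, Pi.smul_apply, Pi.single_apply, smul_eq_mul, Set.mem_Ioi]
      by_cases hk : k = j <;> simp [hk] <;> nlinarith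
    have := hfP _ hzP
    rw [map_add, f.map_smul, smul_eq_mul, ht, div_mul_cancel₀ _ (ne_of_gt hfj)] at this
    linarith
  refine ⟨y, ?_, hynn, ?_⟩
  · intro h0
    have : f (fun _ => (1:ℝ)) = 0 := by
      rw [hkey]; simp [h0]
    linarith
  · intro i
    have hmem : A.mulVec (Pi.single i 1) ∈ C :=
      ⟨Pi.single i 1, 0, fun k => by
        by_cases hk : k = i <;> simp [Pi.single_apply, hk], fun _ => le_refl 0, by simp⟩
    have h1 : 0 ≤ f (A.mulVec (Pi.single i 1)) := hfC0 _ hmem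
    rw [hkey] at h1
    have h2 : y ⬝ᵥ A.mulVec (Pi.single i 1) ≤ 0 := by linarith
    rw [Matrix.dotProduct_mulVec, ← Matrix.mulVec_transpose, dotProduct_single] at h2
    simpa using h2

end Aux

theorem stmt_5 {n m : ℕ} (A : Matrix (Fin m) (Fin n) ℝ) :
    Xor' (∃ x : Fin n → ℝ, (∀ i, 0 ≤ x i) ∧ ∀ j, 0 < A.mulVec x j)
      (∃ y : Fin m → ℝ, y ≠ 0 ∧ (∀ j, 0 ≤ y j) ∧ ∀ i, 0 ≤ (-(Aᵀ.mulVec y)) i) := by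
  by_cases ha : (∃ x : Fin n → ℝ, (∀ i, 0 ≤ x i) ∧ ∀ j, 0 < A.mulVec x j)
  · exact Or.inl ⟨ha, fun hb => not_both A ha hb⟩
  · exact Or.inr ⟨alt_of_not A ha, ha⟩
end

section
/- Let K_1 ⊆ ℝ^n and K_2 ⊆ ℝ^m be proper cones. Let S_1 be an m×m matrix with S_1(ℝ^m_+) ⊆ K_2 and S_1((ℝ^m_+)°) ⊆ K_2°, and let S_2 be an invertible n×n matrix with S_2(ℝ^n_+) ⊆ K_1. If B is an m×n matrix that is (ℝ^n_+, ℝ^m_+)-semipositive, then S_1 B S_2^{-1} is (K_1, K_2)-semipositive. -/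
open Matrix Set

theorem stmt_6 {n m : ℕ} (K₁ : Set (Fin n → ℝ)) (K₂ : Set (Fin m → ℝ))
    (hK₁ : IsProperCone K₁) (hK₂ : IsProperCone K₂)
    (S₁ : Matrix (Fin m) (Fin m) ℝ) (S₂ : Matrix (Fin n) (Fin n) ℝ)
    (hS₁ : ∀ x ∈ posOrth m, S₁.mulVec x ∈ K₂)
    (hS₁' : ∀ x ∈ interior (posOrth m), S₁.mulVec x ∈ interior K₂)
    (hS₂ : IsUnit S₂.det) (hS₂' : ∀ x ∈ posOrth n, S₂.mulVec x ∈ K₁)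
    (B : Matrix (Fin m) (Fin n) ℝ)
    (hB : SemiposCone (posOrth n) (posOrth m) B) :
    SemiposCone K₁ K₂ (S₁ * B * S₂⁻¹) := by
  obtain ⟨x, hx, hBx⟩ := hB
  refine ⟨S₂.mulVec x, ?_, ?_⟩
  · have hInv : Invertible S₂ := S₂.invertibleOfIsUnitDet hS₂
    let e : (Fin n → ℝ) ≃ₗ[ℝ] (Fin n → ℝ) := S₂.toLinearEquiv' hInv
    have he : Continuous e := LinearMap.continuous_of_finiteDimensional e.toLinearMap
    have he' : Continuous e.symm := LinearMap.continuous_of_finiteDimensional e.symm.toLinearMap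
    have hopen : IsOpenMap e := (Homeomorph.mk e.toEquiv he he').isOpenMap
    have hmem : S₂.mulVec x ∈ e '' (interior (posOrth n)) :=
      ⟨x, hx, by show Matrix.toLin' S₂ _ = _; simp [Matrix.toLin'_apply]⟩
    refine interior_maximal ?_ (hopen _ isOpen_interior) hmem
    rintro _ ⟨y, hy, rfl⟩
    have : S₂.mulVec y ∈ K₁ := hS₂' y (interior_subset hy)
    simpa [e, Matrix.toLinearEquiv', Matrix.toLin'_apply] using this
  · have h : (S₁ * B * S₂⁻¹).mulVec (S₂.mulVec x) = S₁.mulVec (B.mulVec x) := by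
      rw [Matrix.mulVec_mulVec, Matrix.mul_assoc, Matrix.mul_assoc,
        Matrix.nonsing_inv_mul _ hS₂, Matrix.mul_one, ← Matrix.mulVec_mulVec]
    rw [h]
    exact hS₁' _ hBx
end

section
/- Let K_1 ⊆ ℝ^n and K_2 ⊆ ℝ^m be proper cones. Let Q_1 be an m×m matrix with Q_1(K_2) ⊆ ℝ^m_+ and Q_1(K_2°) ⊆ (ℝ^m_+)°, and let Q_2 be an invertible n×n matrix with Q_2(K_1) ⊆ ℝ^n_+. If A is (K_1, K_2)-semipositive, then Q_1 A Q_2^{-1} is (ℝ^n_+, ℝ^m_+)-semipositive. -/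
open Matrix Set

theorem stmt_7 {n m : ℕ} (K₁ : Set (Fin n → ℝ)) (K₂ : Set (Fin m → ℝ))
    (hK₁ : IsProperCone K₁) (hK₂ : IsProperCone K₂)
    (Q₁ : Matrix (Fin m) (Fin m) ℝ) (Q₂ : Matrix (Fin n) (Fin n) ℝ)
    (hQ₁ : ∀ x ∈ K₂, Q₁.mulVec x ∈ posOrth m)
    (hQ₁' : ∀ x ∈ interior K₂, Q₁.mulVec x ∈ interior (posOrth m))
    (hQ₂ : IsUnit Q₂.det) (hQ₂' : ∀ x ∈ K₁, Q₂.mulVec x ∈ posOrth n)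
    (A : Matrix (Fin m) (Fin n) ℝ)
    (hA : SemiposCone K₁ K₂ A) :
    SemiposCone (posOrth n) (posOrth m) (Q₁ * A * Q₂⁻¹) := by
  obtain ⟨x, hx, hAx⟩ := hA
  -- the homeomorphism given by Q₂
  let e : (Fin n → ℝ) ≃ₜ (Fin n → ℝ) :=
    { toFun := Q₂.mulVec
      invFun := Q₂⁻¹.mulVec
      left_inv := fun v => by
        simp [Matrix.mulVec_mulVec, Matrix.nonsing_inv_mul Q₂ hQ₂]
      right_inv := fun v => by
        simp [Matrix.mulVec_mulVec, Matrix.mul_nonsing_inv Q₂ hQ₂]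
      continuous_toFun := (Matrix.mulVecLin Q₂).continuous_of_finiteDimensional
      continuous_invFun := (Matrix.mulVecLin Q₂⁻¹).continuous_of_finiteDimensional }
  refine ⟨Q₂.mulVec x, ?_, ?_⟩
  · have h1 : Q₂.mulVec x ∈ e '' interior K₁ := ⟨x, hx, rfl⟩
    have h2 : e '' interior K₁ = interior (e '' K₁) := by
      rw [← Homeomorph.image_interior]
    have h3 : e '' K₁ ⊆ posOrth n := by
      rintro _ ⟨v, hv, rfl⟩; exact hQ₂' v hv
    rw [h2] at h1
    exact interior_mono h3 h1
  · have : (Q₁ * A * Q₂⁻¹).mulVec (Q₂.mulVec x) = Q₁.mulVec (A.mulVec x) := by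
      rw [Matrix.mulVec_mulVec, Matrix.mul_assoc, Matrix.mul_assoc,
        Matrix.nonsing_inv_mul Q₂ hQ₂, Matrix.mul_one, ← Matrix.mulVec_mulVec]
    rw [this]
    exact hQ₁' _ hAx
end

section
/- Let m > n, K_1 ⊆ ℝ^n and K_2 ⊆ ℝ^m be proper cones with K_2 simplicial. Let S be an invertible n×n matrix with S(ℝ^n_+) ⊆ K_1 and T an invertible m×m matrix with T(ℝ^m_+) = K_2. If A is an m×n minimally semipositive matrix (i.e., A is (ℝ^n_+,ℝ^m_+)-semipositive and has a nonnegative left inverse), then T A S^{-1} is (K_1, K_2)-minimally semipositive (i.e., (K_1,K_2)-semipositive with a (K_2, K_1)-nonnegative left inverse). -/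
open Matrix Set

lemma mulVec_img_eq {k : ℕ} (M : Matrix (Fin k) (Fin k) ℝ) (hM : IsUnit M.det)
    (U : Set (Fin k → ℝ)) : M.mulVec '' U = M⁻¹.mulVec ⁻¹' U := by
  ext x
  constructor
  · rintro ⟨u, hu, rfl⟩
    simpa [Matrix.mulVec_mulVec, Matrix.nonsing_inv_mul M hM] using hu
  · intro hx
    exact ⟨M⁻¹.mulVec x, hx, by
      simp [Matrix.mulVec_mulVec, Matrix.mul_nonsing_inv M hM]⟩

lemma mulVec_img_open {k : ℕ} (M : Matrix (Fin k) (Fin k) ℝ) (hM : IsUnit M.det)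
    {U : Set (Fin k → ℝ)} (hU : IsOpen U) : IsOpen (M.mulVec '' U) := by
  rw [mulVec_img_eq M hM]
  exact hU.preimage (M⁻¹.mulVecLin.continuous_of_finiteDimensional)

theorem stmt_8 {n m : ℕ} (hmn : n < m) (K₁ : Set (Fin n → ℝ)) (K₂ : Set (Fin m → ℝ))
    (hK₁ : IsProperCone K₁) (hK₂ : IsProperCone K₂)
    (hsimp : ∃ W : Matrix (Fin m) (Fin m) ℝ, IsUnit W.det ∧
      W.mulVec '' posOrth m = K₂)
    (S : Matrix (Fin n) (Fin n) ℝ) (T : Matrix (Fin m) (Fin m) ℝ)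
    (hS : IsUnit S.det) (hS' : ∀ x ∈ posOrth n, S.mulVec x ∈ K₁)
    (hT : IsUnit T.det) (hT' : T.mulVec '' posOrth m = K₂)
    (A : Matrix (Fin m) (Fin n) ℝ)
    (hA : SemiposCone (posOrth n) (posOrth m) A)
    (hA' : ∃ B : Matrix (Fin n) (Fin m) ℝ, B * A = 1 ∧
      ∀ x ∈ posOrth m, B.mulVec x ∈ posOrth n) :
    SemiposCone K₁ K₂ (T * A * S⁻¹) ∧
      ∃ B : Matrix (Fin n) (Fin m) ℝ, B * (T * A * S⁻¹) = 1 ∧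
        ∀ x ∈ K₂, B.mulVec x ∈ K₁ := by
  obtain ⟨x₀, hx₀, hAx₀⟩ := hA
  obtain ⟨B, hBA, hBnn⟩ := hA'
  constructor
  · -- semipositivity
    refine ⟨S.mulVec x₀, ?_, ?_⟩
    · -- S x₀ ∈ interior K₁
      have hopen : IsOpen (S.mulVec '' interior (posOrth n)) :=
        mulVec_img_open S hS isOpen_interior
      have hsub : S.mulVec '' interior (posOrth n) ⊆ K₁ := by
        rintro _ ⟨u, hu, rfl⟩
        exact hS' u (interior_subset hu)
      exact interior_maximal hsub hopen ⟨x₀, hx₀, rfl⟩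
    · -- (T*A*S⁻¹) (S x₀) = T (A x₀) ∈ interior K₂
      have key : (T * A * S⁻¹).mulVec (S.mulVec x₀) = T.mulVec (A.mulVec x₀) := by
        rw [Matrix.mulVec_mulVec, Matrix.mul_assoc, Matrix.mul_assoc,
          Matrix.nonsing_inv_mul S hS, Matrix.mul_one, ← Matrix.mulVec_mulVec]
      rw [key]
      have hopen : IsOpen (T.mulVec '' interior (posOrth m)) :=
        mulVec_img_open T hT isOpen_interior
      have hsub : T.mulVec '' interior (posOrth m) ⊆ K₂ := by
        rintro _ ⟨u, hu, rfl⟩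
        rw [← hT']
        exact ⟨u, interior_subset hu, rfl⟩
      exact interior_maximal hsub hopen ⟨A.mulVec x₀, hAx₀, rfl⟩
  · -- left inverse
    refine ⟨S * B * T⁻¹, ?_, ?_⟩
    · calc S * B * T⁻¹ * (T * A * S⁻¹)
          = S * (B * (T⁻¹ * T * A)) * S⁻¹ := by simp only [Matrix.mul_assoc]
        _ = S * S⁻¹ := by
            rw [Matrix.nonsing_inv_mul T hT, Matrix.one_mul, hBA, Matrix.mul_one]
        _ = 1 := Matrix.mul_nonsing_inv S hS
    · intro x hx
      rw [← hT'] at hx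
      obtain ⟨y, hy, rfl⟩ := hx
      have : (S * B * T⁻¹).mulVec (T.mulVec y) = S.mulVec (B.mulVec y) := by
        rw [Matrix.mulVec_mulVec, Matrix.mul_assoc, Matrix.nonsing_inv_mul T hT,
          Matrix.mul_one, ← Matrix.mulVec_mulVec]
      rw [this]
      exact hS' _ (hBnn y hy)
end

section
/- Given proper cones K_1 ⊆ ℝ^n and K_2 ⊆ ℝ^m, the set of (K_1,K_2)-semipositive matrices contains a basis of the real vector space M_{m,n}(ℝ) of m×n matrices. -/
open Matrix Set

/-!
The semipositive matrices form an open set, and it is nonempty: pointedness keeps `0` out of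
`int K₁`, and a rank-one matrix sends a nonzero `x ∈ int K₁` to any `u ∈ int K₂`. A nonempty
open set in a finite-dimensional real space spans it, and a spanning set contains a basis.
-/

theorem Module.Basis.exists_basis_forall_mem_of_span_eq_top {K V ι : Type*} [DivisionRing K]
    [AddCommGroup V] [Module K V] (b₀ : Basis ι K V) {s : Set V}
    (hs : Submodule.span K s = ⊤) : ∃ b : Basis ι K V, ∀ i, b i ∈ s := by
  let b := Basis.ofSpan hs.ge
  refine ⟨b.reindex (b.indexEquiv b₀), fun i => ?_⟩
  rw [Basis.reindex_apply]
  exact Basis.ofSpan_subset hs.ge (mem_range_self _)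

theorem zero_notMem_interior_of_inter_neg_eq_singleton {E : Type*} [NormedAddCommGroup E]
    [NormedSpace ℝ E] [Nontrivial E] {K : Set E} (hK : K ∩ -K = {0}) : (0 : E) ∉ interior K := by
  intro h0
  have hK0 : K ∈ nhds (0 : E) := mem_interior_iff_mem_nhds.mp h0
  have hnegK0 : -K ∈ nhds (0 : E) := by simpa using neg_mem_nhds_zero E hK0
  have h_single : ({0} : Set E) ∈ nhds (0 : E) := hK ▸ Filter.inter_mem hK0 hnegK0
  exact not_isOpen_singleton (0 : E) <| (isOpen_singleton_iff_nhds_eq_pure _).mpr <|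
    le_antisymm (Filter.le_pure_iff.mpr h_single) (pure_le_nhds _)

theorem Matrix.exists_mulVec_eq_of_ne_zero {K m n : Type*} [DivisionRing K] [Fintype n]
    {x : n → K} (hx : x ≠ 0) (u : m → K) : ∃ A : Matrix m n K, A *ᵥ x = u := by
  classical
  obtain ⟨i, hi⟩ := Function.ne_iff.mp hx
  refine ⟨vecMulVec u (Pi.single i (x i)⁻¹), ?_⟩
  rw [vecMulVec_mulVec, single_dotProduct, inv_mul_cancel₀ hi]
  simp

section Semipositive

variable {n m : ℕ}

theorem isOpen_setOf_semiposCone (K₁ : Set (Fin n → ℝ)) (K₂ : Set (Fin m → ℝ)) :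
    IsOpen {A | SemiposCone K₁ K₂ A} := by
  have : {A | SemiposCone K₁ K₂ A} =
      ⋃ x ∈ interior K₁, (fun A : Matrix (Fin m) (Fin n) ℝ => A *ᵥ x) ⁻¹' interior K₂ := by
    ext A; simp [SemiposCone]
  rw [this]
  exact isOpen_biUnion fun x _ =>
    isOpen_interior.preimage (continuous_id.matrix_mulVec continuous_const)

theorem IsProperCone.exists_semiposCone [Nonempty (Fin n)] {K₁ : Set (Fin n → ℝ)}
    (hK₁ : IsProperCone K₁) {K₂ : Set (Fin m → ℝ)} (hK₂ : (interior K₂).Nonempty) :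
    ∃ A, SemiposCone K₁ K₂ A := by
  obtain ⟨x, hx⟩ := hK₁.2.2.2.2
  obtain ⟨u, hu⟩ := hK₂
  have hx0 : x ≠ 0 := by
    rintro rfl
    exact zero_notMem_interior_of_inter_neg_eq_singleton hK₁.2.2.2.1 hx
  obtain ⟨A, hA⟩ := exists_mulVec_eq_of_ne_zero hx0 u
  exact ⟨A, x, hx, hA ▸ hu⟩

end Semipositive

theorem stmt_10 {n m : ℕ} (K₁ : Set (Fin n → ℝ)) (K₂ : Set (Fin m → ℝ))
    (hK₁ : IsProperCone K₁) (hK₂ : IsProperCone K₂) :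
    ∃ b : Module.Basis (Fin m × Fin n) ℝ (Matrix (Fin m) (Fin n) ℝ),
      ∀ p, SemiposCone K₁ K₂ (b p) := by
  have hspan : Submodule.span ℝ {A | SemiposCone K₁ K₂ A} = ⊤ := by
    rcases isEmpty_or_nonempty (Fin n) with _ | _
    · exact Subsingleton.elim _ _
    obtain ⟨A, hA⟩ := hK₁.exists_semiposCone hK₂.2.2.2.2
    exact Submodule.eq_top_of_nonempty_interior' _
      ⟨A, interior_maximal Submodule.subset_span (isOpen_setOf_semiposCone K₁ K₂) hA⟩
  exact (Matrix.stdBasis ℝ (Fin m) (Fin n)).exists_basis_forall_mem_of_span_eq_top hspan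
end

section
/- Let X be an n×n real matrix and K ⊆ ℝ^n a proper cone. If S X T maps ℝ^n_+ into ℝ^n_+ for every invertible n×n matrix T with T(ℝ^n_+) ⊆ K and every invertible n×n matrix S with S(K) ⊆ ℝ^n_+, then X(K) ⊆ K. -/
open Matrix Set

/-!
Both `K` and its dual cone `K*` span `ℝ^n`: `K` because it has interior points, `K*` because a
vector orthogonal to `K*` lies in `K ∩ -K` by the bipolar theorem. Hence a nonzero `x ∈ K` can be
completed to a basis of vectors of `K`, which are the columns of an admissible `T` with
`T eᵢ = x`, and a nonzero `φ ∈ K*` to a basis of vectors of `K*`, which are the rows of an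
admissible `S` with `j`-th row `φ`. The `(j, i)` entry of `S X T` is then `φ ⬝ X x ≥ 0`, and by
the bipolar theorem again `X x ∈ K`.
-/

def IsProperCone.toProperCone {n : ℕ} {K : Set (Fin n → ℝ)} (hK : IsProperCone K) :
    ProperCone ℝ (Fin n → ℝ) where
  carrier := K
  add_mem' hx hy := hK.1 _ hx _ hy
  zero_mem' := (hK.2.2.2.1.symm.subset rfl).1
  smul_mem' c _ hx := hK.2.1 c c.2 _ hx
  isClosed' := hK.2.2.1

theorem ProperCone.mem_of_forall_dotProduct_nonneg {n : ℕ} (C : ProperCone ℝ (Fin n → ℝ))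
    {x : Fin n → ℝ} (hx : ∀ φ ∈ dualCone (C : Set (Fin n → ℝ)), 0 ≤ φ ⬝ᵥ x) : x ∈ C := by
  by_contra hxC
  obtain ⟨f, hfC, hfx⟩ := C.hyperplane_separation_point hxC
  obtain ⟨u, hu⟩ := (dotProductEquiv ℝ (Fin n)).surjective f.toLinearMap
  have hf : ∀ y, f y = u ⬝ᵥ y := fun y => (LinearMap.congr_fun hu y).symm
  exact (hx u fun y hy => hf y ▸ hfC y hy).not_gt (hf x ▸ hfx)

theorem ProperCone.span_dualCone_eq_top {n : ℕ} (C : ProperCone ℝ (Fin n → ℝ))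
    (hC : (C : Set (Fin n → ℝ)) ∩ -C = {0}) :
    Submodule.span ℝ (dualCone (C : Set (Fin n → ℝ))) = ⊤ := by
  by_contra hne
  obtain ⟨f, hf0, hker⟩ := Submodule.exists_le_ker_of_lt_top _ (lt_top_iff_ne_top.2 hne)
  obtain ⟨u, rfl⟩ := (dotProductEquiv ℝ (Fin n)).surjective f
  have hu : ∀ φ ∈ dualCone (C : Set (Fin n → ℝ)), φ ⬝ᵥ u = 0 := fun φ hφ => by
    simpa [dotProduct_comm] using hker (Submodule.subset_span hφ)
  have huC : u ∈ C := C.mem_of_forall_dotProduct_nonneg fun φ hφ => (hu φ hφ).ge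
  have hnuC : -u ∈ C := C.mem_of_forall_dotProduct_nonneg fun φ hφ => by simp [hu φ hφ]
  have : u = 0 := hC.subset ⟨huC, hnuC⟩
  simp [this] at hf0

open Submodule in
theorem exists_linearIndependent_mem_of_span_eq_top {K V ι : Type*} [DivisionRing K]
    [AddCommGroup V] [Module K V] [FiniteDimensional K V] [Fintype ι]
    (hι : Fintype.card ι = Module.finrank K V) {s : Set V} (hs : span K s = ⊤)
    {v : V} (hv : v ∈ s) (hv0 : v ≠ 0) :
    ∃ b : ι → V, LinearIndependent K b ∧ (∀ i, b i ∈ s) ∧ ∃ i, b i = v := by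
  obtain ⟨t, hts, hvt, hst, hli⟩ := exists_linearIndepOn_id_extension
    (LinearIndepOn.singleton (R := K) (v := id) hv0) (singleton_subset_iff.2 hv)
  let B := Module.Basis.mk hli (by simpa [← hs] using span_le.2 hst)
  have : Fintype t := FiniteDimensional.fintypeBasisIndex B
  let e : ι ≃ t := Fintype.equivOfCardEq (hι.trans (Module.finrank_eq_card_basis B))
  exact ⟨(↑) ∘ e, hli.comp e e.injective, fun i => hts (e i).2, e.symm ⟨v, hvt rfl⟩, by simp⟩

theorem exists_isUnit_det_mulVec_single_one_eq {n : ℕ} (C : PointedCone ℝ (Fin n → ℝ))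
    (hC : Submodule.span ℝ (C : Set (Fin n → ℝ)) = ⊤) {x : Fin n → ℝ} (hx : x ∈ C)
    (hx0 : x ≠ 0) :
    ∃ T : Matrix (Fin n) (Fin n) ℝ, IsUnit T.det ∧ (∀ y ∈ posOrth n, T *ᵥ y ∈ C) ∧
      ∃ i, T *ᵥ Pi.single i 1 = x := by
  obtain ⟨b, hb, hbC, i, rfl⟩ :=
    exists_linearIndependent_mem_of_span_eq_top (ι := Fin n) (by simp) hC hx hx0
  refine ⟨(of b)ᵀ, ?_, fun y hy => ?_, i, by rw [mulVec_single_one]; rfl⟩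
  · rw [det_transpose, ← isUnit_iff_isUnit_det]
    exact linearIndependent_rows_iff_isUnit.1 hb
  · rw [mulVec_transpose, vecMul_eq_sum]
    exact C.sum_mem fun i _ => C.smul_mem (hy i) (hbC i)

theorem exists_isUnit_det_row_eq {n : ℕ} {K : Set (Fin n → ℝ)}
    (hK : Submodule.span ℝ (dualCone K) = ⊤) {φ : Fin n → ℝ} (hφ : φ ∈ dualCone K)
    (hφ0 : φ ≠ 0) :
    ∃ S : Matrix (Fin n) (Fin n) ℝ, IsUnit S.det ∧ (∀ y ∈ K, S *ᵥ y ∈ posOrth n) ∧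
      ∃ j, S j = φ := by
  obtain ⟨c, hc, hcK, j, rfl⟩ :=
    exists_linearIndependent_mem_of_span_eq_top (ι := Fin n) (by simp) hK hφ hφ0
  refine ⟨of c, ?_, fun y hy i => hcK i y hy, j, rfl⟩
  rw [← isUnit_iff_isUnit_det]
  exact linearIndependent_rows_iff_isUnit.1 hc

theorem stmt_11 {n : ℕ} (K : Set (Fin n → ℝ)) (hK : IsProperCone K)
    (X : Matrix (Fin n) (Fin n) ℝ)
    (h : ∀ T S : Matrix (Fin n) (Fin n) ℝ, IsUnit T.det → IsUnit S.det →
      (∀ x ∈ posOrth n, T.mulVec x ∈ K) → (∀ x ∈ K, S.mulVec x ∈ posOrth n) →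
      ∀ x ∈ posOrth n, (S * X * T).mulVec x ∈ posOrth n) :
    ∀ x ∈ K, X.mulVec x ∈ K := by
  set C := hK.toProperCone
  have hspan : Submodule.span ℝ K = ⊤ :=
    (Submodule.span ℝ K).eq_top_of_nonempty_interior'
      (hK.2.2.2.2.mono (interior_mono Submodule.subset_span))
  intro x hx
  refine C.mem_of_forall_dotProduct_nonneg fun φ hφ => ?_
  rcases eq_or_ne x 0 with rfl | hx0
  · simp
  rcases eq_or_ne φ 0 with rfl | hφ0
  · simp
  obtain ⟨T, hTdet, hT, i, hTi⟩ := exists_isUnit_det_mulVec_single_one_eq C hspan hx hx0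
  obtain ⟨S, hSdet, hS, j, hSj⟩ :=
    exists_isUnit_det_row_eq (C.span_dualCone_eq_top hK.2.2.2.1) hφ hφ0
  have hei : Pi.single i 1 ∈ posOrth n := fun k => by by_cases hk : k = i <;> simp [hk]
  have hij := h T S hTdet hSdet hT hS _ hei j
  rw [← mulVec_mulVec, ← mulVec_mulVec, hTi] at hij
  exact hSj ▸ hij
end

section
/- Let X be an n×n real matrix and K ⊆ ℝ^n a proper cone. If S^{-1} X (T^t)^{-1} is entrywise nonnegative for all invertible matrices S with S(ℝ^n_+) ⊆ K and all invertible matrices T with T(ℝ^n_+) ⊆ K^*, then X(K) ⊆ K. -/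
open Matrix Set

/-!
A basis of `ℝ^n` inside `K` (which has interior) and one inside `K^*` (which spans because `K` is
closed and pointed, by the bipolar theorem) give invertible `S`, `T` with `S(ℝ^n_+) ⊆ K` and
`T(ℝ^n_+) ⊆ K^*`. Then `X = S M Tᵀ` with `M = S⁻¹ X (Tᵀ)⁻¹` entrywise nonnegative, and for `x ∈ K`
the entries of `Tᵀ x` are `⟨T eⱼ, x⟩ ≥ 0`, so `X x = S (M Tᵀ x) ∈ S(ℝ^n_+) ⊆ K`.
-/

theorem dualCone_dualCone {n : ℕ} (C : ProperCone ℝ (Fin n → ℝ)) :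
    dualCone (dualCone (C : Set (Fin n → ℝ))) = C := by
  refine Subset.antisymm (fun v hv => ?_) (fun v hv y hy => dotProduct_comm y v ▸ hy v hv)
  by_contra hvC
  obtain ⟨f, hfC, hfv⟩ := C.hyperplane_separation_point hvC
  obtain ⟨y, hy⟩ := (dotProductEquiv ℝ (Fin n)).surjective f.toLinearMap
  have hf : ∀ x, f x = y ⬝ᵥ x := fun x => by rw [← f.coe_coe, ← hy]; rfl
  refine (hv y fun x hx => (hf x) ▸ hfC x hx).not_gt ?_
  rwa [dotProduct_comm, ← hf]

namespace IsProperCone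

variable {n : ℕ} {K : Set (Fin n → ℝ)}

def toProperCone_s13 (hK : IsProperCone K) : ProperCone ℝ (Fin n → ℝ) where
  carrier := K
  add_mem' := fun hx hy => hK.1 _ hx _ hy
  zero_mem' := (hK.2.2.2.1.symm.subset rfl).1
  smul_mem' := fun c _ hx => hK.2.1 c c.2 _ hx
  isClosed' := hK.2.2.1

theorem span_eq_top (hK : IsProperCone K) : Submodule.span ℝ K = ⊤ :=
  Submodule.eq_top_of_nonempty_interior' _ (hK.2.2.2.2.mono (interior_mono Submodule.subset_span))

theorem span_dualCone_eq_top (hK : IsProperCone K) : Submodule.span ℝ (dualCone K) = ⊤ := by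
  by_contra hne
  obtain ⟨f, hf0, hker⟩ := (Submodule.span ℝ (dualCone K)).exists_le_ker_of_lt_top
    (lt_top_iff_ne_top.2 hne)
  obtain ⟨w, rfl⟩ := (dotProductEquiv ℝ (Fin n)).surjective f
  have hw : ∀ y ∈ dualCone K, w ⬝ᵥ y = 0 := fun y hy => hker (Submodule.subset_span hy)
  have mem_of_orthogonal : ∀ v, (∀ y ∈ dualCone K, v ⬝ᵥ y = 0) → v ∈ K := fun v hv =>
    (dualCone_dualCone hK.toProperCone_s13).subset fun y hy => (hv y hy).ge
  have hw0 : w ∈ K ∩ -K :=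
    ⟨mem_of_orthogonal w hw,
      mem_of_orthogonal (-w) fun y hy => by rw [neg_dotProduct, hw y hy, neg_zero]⟩
  rw [hK.2.2.2.1, mem_singleton_iff] at hw0
  exact hf0 (by rw [hw0, map_zero])

end IsProperCone

theorem exists_isUnit_det_mulVec_posOrth_subset {n : ℕ} (C : PointedCone ℝ (Fin n → ℝ))
    (hC : Submodule.span ℝ (C : Set (Fin n → ℝ)) = ⊤) :
    ∃ M : Matrix (Fin n) (Fin n) ℝ, IsUnit M.det ∧ ∀ x ∈ posOrth n, M *ᵥ x ∈ C := by
  let b₀ := Module.Basis.ofSpan hC.ge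
  let b := b₀.reindex (b₀.indexEquiv (Pi.basisFun ℝ (Fin n)))
  have hbC : ∀ j, b j ∈ C := fun j =>
    Module.Basis.ofSpan_subset hC.ge ⟨_, (b₀.reindex_apply _ j).symm⟩
  refine ⟨(Matrix.of b)ᵀ, ?_, fun x hx => ?_⟩
  · rw [det_transpose, ← isUnit_iff_isUnit_det, ← linearIndependent_rows_iff_isUnit]
    exact b.linearIndependent
  · rw [mulVec_transpose, vecMul_eq_sum]
    exact C.sum_mem fun j _ => C.smul_mem (hx j) (hbC j)

theorem mem_posOrth {n : ℕ} {x : Fin n → ℝ} : x ∈ posOrth n ↔ 0 ≤ x := Iff.rfl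

theorem mulVec_nonneg {m n : Type*} [Fintype n] {M : Matrix m n ℝ} (hM : ∀ i j, 0 ≤ M i j)
    {x : n → ℝ} (hx : 0 ≤ x) : 0 ≤ M *ᵥ x :=
  fun i => Finset.sum_nonneg fun j _ => mul_nonneg (hM i j) (hx j)

theorem transpose_mulVec_nonneg_of_mapsTo_dualCone {n : ℕ}
    {K : Set (Fin n → ℝ)} {T : Matrix (Fin n) (Fin n) ℝ}
    (hT : ∀ x ∈ posOrth n, T *ᵥ x ∈ dualCone K) {x : Fin n → ℝ} (hx : x ∈ K) :
    0 ≤ Tᵀ *ᵥ x := fun j => by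
  have h := hT (Pi.single j 1) (mem_posOrth.2 (Pi.single_nonneg.2 zero_le_one)) x hx
  rwa [mulVec_single_one] at h

theorem stmt_13 {n : ℕ} (K : Set (Fin n → ℝ)) (hK : IsProperCone K)
    (X : Matrix (Fin n) (Fin n) ℝ)
    (h : ∀ S T : Matrix (Fin n) (Fin n) ℝ, IsUnit S.det → IsUnit T.det →
      (∀ x ∈ posOrth n, S.mulVec x ∈ K) →
      (∀ x ∈ posOrth n, T.mulVec x ∈ dualCone K) →
      ∀ i j, 0 ≤ (S⁻¹ * X * (Tᵀ)⁻¹) i j) :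
    ∀ x ∈ K, X.mulVec x ∈ K := by
  intro x hx
  obtain ⟨S, hSdet, hS⟩ :=
    exists_isUnit_det_mulVec_posOrth_subset hK.toProperCone_s13.toSubmodule hK.span_eq_top
  -- the carrier of this pointed cone is `dualCone K` by definition
  obtain ⟨T, hTdet, hT⟩ := exists_isUnit_det_mulVec_posOrth_subset
    (PointedCone.dual (dotProductBilin ℝ ℝ).flip K) hK.span_dualCone_eq_top
  have hX : S * (S⁻¹ * X * (Tᵀ)⁻¹) * Tᵀ = X := by
    rw [Matrix.mul_assoc S⁻¹, mul_nonsing_inv_cancel_left _ _ hSdet,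
      nonsing_inv_mul_cancel_right _ _ (by rwa [det_transpose])]
  rw [← hX, ← mulVec_mulVec, ← mulVec_mulVec]
  exact hS _ (mulVec_nonneg (h S T hSdet hTdet hS hT)
    (transpose_mulVec_nonneg_of_mapsTo_dualCone hT hx))
end

section
/- Let K_1 ⊆ ℝ^n, K_2 ⊆ ℝ^m be proper cones, Q_1 an invertible m×m matrix with Q_1(K_2) ⊆ ℝ^m_+, and Q_2 an invertible n×n matrix with Q_2(K_1) ⊆ ℝ^n_+. If A is left (ℝ^n_+, ℝ^m_+)-semipositive, then Q_1^{-1} A Q_2 is left (K_1,K_2)-semipositive. -/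
open Matrix Set

/-- Left `(K₁,K₂)`-semipositivity. -/
def LeftSemiposCone {n m : ℕ} (K₁ : Set (Fin n → ℝ)) (K₂ : Set (Fin m → ℝ))
    (A : Matrix (Fin m) (Fin n) ℝ) : Prop :=
  ∃ x ∈ dualCone K₂, Aᵀ.mulVec x ∈ interior (dualCone K₁)

lemma mem_dual_posOrth {n : ℕ} {x : Fin n → ℝ} (hx : x ∈ dualCone (posOrth n)) :
    ∀ i, 0 ≤ x i := by
  intro i
  have h := hx (Pi.single i 1) (by
    intro j
    rcases eq_or_ne j i with rfl | hj
    · simp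
    · simp [Pi.single_apply, hj])
  simpa using h

lemma mem_interior_dual_posOrth {n : ℕ} {v : Fin n → ℝ}
    (hv : v ∈ interior (dualCone (posOrth n))) : ∀ i, 0 < v i := by
  intro i
  rw [mem_interior_iff_mem_nhds, Metric.mem_nhds_iff] at hv
  obtain ⟨ε, hε, hball⟩ := hv
  set e : Fin n → ℝ := Pi.single i 1 with he
  have hsingle : e ∈ posOrth n := by
    intro j
    rcases eq_or_ne j i with rfl | hj
    · simp [he]
    · simp [he, Pi.single_apply, hj]
  have hmem : v - (ε/2) • e ∈ Metric.ball v ε := by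
    rw [Metric.mem_ball, dist_eq_norm]
    have h0 : v - (ε/2) • e - v = -((ε/2) • e) := by ring_nf
    rw [h0, norm_neg, norm_smul]
    have h1 : ‖e‖ = 1 := by
      simp [he, Pi.norm_single]
    rw [h1, mul_one, Real.norm_eq_abs, abs_of_pos (by linarith : (0:ℝ) < ε/2)]
    linarith
  have h := hball hmem e hsingle
  simp [dotProduct, he, Pi.single_apply, Finset.sum_ite_eq'] at h
  linarith

/-- If `w` pairs strictly positively with every nonzero element of a closed cone `K`,
then `w` is in the interior of the dual cone. -/
lemma mem_interior_dualCone {n : ℕ} {K : Set (Fin n → ℝ)} (hclosed : IsClosed K)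
    (hsmul : ∀ (c : ℝ), 0 ≤ c → ∀ x ∈ K, c • x ∈ K) {w : Fin n → ℝ}
    (hw : ∀ z ∈ K, z ≠ 0 → 0 < w ⬝ᵥ z) : w ∈ interior (dualCone K) := by
  by_cases hK : ∃ z ∈ K, z ≠ 0
  · obtain ⟨z₀, hz₀K, hz₀⟩ := hK
    set S : Set (Fin n → ℝ) := K ∩ Metric.sphere 0 1 with hS
    have hScompact : IsCompact S := (isCompact_sphere 0 1).inter_left hclosed
    have hz₀norm : ‖z₀‖ ≠ 0 := norm_ne_zero_iff.mpr hz₀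
    have hSne : S.Nonempty := by
      refine ⟨‖z₀‖⁻¹ • z₀, hsmul _ (by positivity) _ hz₀K, ?_⟩
      simp [norm_smul, abs_of_nonneg (by positivity : (0:ℝ) ≤ ‖z₀‖⁻¹),
        inv_mul_cancel₀ hz₀norm]
    have hcont : Continuous fun z : Fin n → ℝ => w ⬝ᵥ z := by
      simp only [dotProduct]
      exact continuous_finset_sum _ fun i _ => continuous_const.mul (continuous_apply i)
    obtain ⟨u₀, hu₀S, hu₀min⟩ := hScompact.exists_isMinOn hSne hcont.continuousOn
    set δ : ℝ := w ⬝ᵥ u₀ with hδ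
    have hu₀ne : u₀ ≠ 0 := by
      intro h
      have := hu₀S.2
      rw [h] at this
      simp at this
    have hδpos : 0 < δ := hw u₀ hu₀S.1 hu₀ne
    set r : ℝ := δ / (n + 1) with hr
    have hrpos : 0 < r := by positivity
    rw [mem_interior]
    refine ⟨Metric.ball w r, ?_, Metric.isOpen_ball, Metric.mem_ball_self hrpos⟩
    intro w' hw' z hzK
    rcases eq_or_ne z 0 with rfl | hz
    · simp
    · have hznorm : ‖z‖ ≠ 0 := norm_ne_zero_iff.mpr hz
      set u : Fin n → ℝ := ‖z‖⁻¹ • z with hu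
      have huS : u ∈ S := by
        refine ⟨hsmul _ (by positivity) _ hzK, ?_⟩
        simp [hu, norm_smul, abs_of_nonneg (by positivity : (0:ℝ) ≤ ‖z‖⁻¹),
          inv_mul_cancel₀ hznorm]
      have hunorm : ‖u‖ = 1 := by simpa using huS.2
      -- bound the perturbation
      have hbound : |(w' - w) ⬝ᵥ u| ≤ n * dist w' w := by
        calc |(w' - w) ⬝ᵥ u| ≤ ∑ i, |(w' - w) i * u i| := by
              exact Finset.abs_sum_le_sum_abs _ _
          _ ≤ ∑ i : Fin n, dist w' w * 1 := by
              apply Finset.sum_le_sum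
              intro i _
              rw [abs_mul]
              apply mul_le_mul
              · rw [dist_eq_norm]
                exact norm_le_pi_norm (w' - w) i
              · have := norm_le_pi_norm u i
                rw [hunorm] at this
                exact this
              · exact abs_nonneg _
              · exact dist_nonneg
          _ = n * dist w' w := by simp [Finset.sum_const, mul_comm]
      have hwu : δ ≤ w ⬝ᵥ u := hu₀min huS
      have hdist : dist w' w < r := Metric.mem_ball.mp hw'
      have hkey : 0 < w' ⬝ᵥ u := by
        have h1 : w' ⬝ᵥ u = w ⬝ᵥ u + (w' - w) ⬝ᵥ u := by
          rw [sub_dotProduct]; ring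
        have h2 : (w' - w) ⬝ᵥ u ≥ -(n * dist w' w) := by
          have := neg_abs_le ((w' - w) ⬝ᵥ u)
          linarith [hbound]
        have h3 : (n : ℝ) * dist w' w ≤ n * r :=
          mul_le_mul_of_nonneg_left hdist.le (by positivity)
        have h4 : (n : ℝ) * r < δ := by
          rw [hr]
          have hn1 : (0:ℝ) < n + 1 := by positivity
          rw [div_eq_iff (ne_of_gt hn1)] at *
          calc (n:ℝ) * (δ / (n+1)) = δ * (n / (n+1)) := by ring
            _ < δ * 1 := by
                apply mul_lt_mul_of_pos_left _ hδpos
                rw [div_lt_one hn1]; linarith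
            _ = δ := by ring
        linarith
      have hz_eq : z = ‖z‖ • u := by
        rw [hu, smul_smul, mul_inv_cancel₀ hznorm, one_smul]
      have hfin : w' ⬝ᵥ z = ‖z‖ * (w' ⬝ᵥ u) := by
        conv_lhs => rw [hz_eq]
        rw [dotProduct_smul, smul_eq_mul]
      rw [hfin]
      positivity
  · push_neg at hK
    have : dualCone K = Set.univ := by
      apply Set.eq_univ_of_forall
      intro y z hz
      rw [hK z hz]
      simp
    rw [this]
    simp

theorem stmt_18 {n m : ℕ} (K₁ : Set (Fin n → ℝ)) (K₂ : Set (Fin m → ℝ))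
    (hK₁ : IsProperCone K₁) (hK₂ : IsProperCone K₂)
    (Q₁ : Matrix (Fin m) (Fin m) ℝ) (Q₂ : Matrix (Fin n) (Fin n) ℝ)
    (hQ₁ : IsUnit Q₁.det) (hQ₁' : ∀ x ∈ K₂, Q₁.mulVec x ∈ posOrth m)
    (hQ₂ : IsUnit Q₂.det) (hQ₂' : ∀ x ∈ K₁, Q₂.mulVec x ∈ posOrth n)
    (A : Matrix (Fin m) (Fin n) ℝ)
    (hA : LeftSemiposCone (posOrth n) (posOrth m) A) :
    LeftSemiposCone K₁ K₂ (Q₁⁻¹ * A * Q₂) := by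
  obtain ⟨x, hx, hAx⟩ := hA
  have hxnn : ∀ i, 0 ≤ x i := mem_dual_posOrth hx
  have hAxpos : ∀ i, 0 < Aᵀ.mulVec x i := mem_interior_dual_posOrth hAx
  refine ⟨Q₁ᵀ.mulVec x, ?_, ?_⟩
  · intro z hz
    have h1 : Q₁ᵀ.mulVec x ⬝ᵥ z = x ⬝ᵥ Q₁.mulVec z := by
      rw [Matrix.mulVec_transpose, ← Matrix.dotProduct_mulVec]
    rw [h1]
    have h2 := hQ₁' z hz
    exact Finset.sum_nonneg fun i _ => mul_nonneg (hxnn i) (h2 i)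
  · have hcalc : (Q₁⁻¹ * A * Q₂)ᵀ.mulVec (Q₁ᵀ.mulVec x) = Q₂ᵀ.mulVec (Aᵀ.mulVec x) := by
      rw [Matrix.mulVec_mulVec]
      have : (Q₁⁻¹ * A * Q₂)ᵀ * Q₁ᵀ = Q₂ᵀ * Aᵀ := by
        rw [← Matrix.transpose_mul]
        have h5 : Q₁ * (Q₁⁻¹ * A * Q₂) = A * Q₂ := by
          rw [Matrix.mul_assoc Q₁⁻¹, ← Matrix.mul_assoc Q₁, Matrix.mul_nonsing_inv Q₁ hQ₁,
            Matrix.one_mul]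
        rw [h5, Matrix.transpose_mul]
      rw [this, ← Matrix.mulVec_mulVec]
    rw [hcalc]
    apply mem_interior_dualCone hK₁.2.2.1 hK₁.2.1
    intro z hzK hz
    have h1 : Q₂ᵀ.mulVec (Aᵀ.mulVec x) ⬝ᵥ z = Aᵀ.mulVec x ⬝ᵥ Q₂.mulVec z := by
      rw [Matrix.mulVec_transpose, ← Matrix.dotProduct_mulVec]
    rw [h1]
    have h2 := hQ₂' z hzK
    have hQz : Q₂.mulVec z ≠ 0 := by
      intro h
      apply hz
      have := congrArg (Q₂⁻¹.mulVec) h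
      rwa [Matrix.mulVec_mulVec, Matrix.nonsing_inv_mul Q₂ hQ₂, Matrix.one_mulVec,
        Matrix.mulVec_zero] at this
    obtain ⟨i, hi⟩ := Function.ne_iff.mp hQz
    have hipos : 0 < Q₂.mulVec z i := lt_of_le_of_ne (h2 i) (by simpa using (Ne.symm hi))
    apply Finset.sum_pos'
    · intro j _
      exact mul_nonneg (hAxpos j).le (h2 j)
    · exact ⟨i, Finset.mem_univ i, mul_pos (hAxpos i) hipos⟩
end

section
/- Let L : M_{m,n}(ℝ) → M_{m,n}(ℝ) be an invertible linear map that maps the set of (ℝ^n_+, ℝ^m_+)-semipositive matrices into itself, and suppose that L(A) has rank one whenever A is a rank-one semipositive matrix. Then L preserves the set of rank-one matrices in M_{m,n}(ℝ), i.e., rank(L(A)) = 1 whenever rank(A) = 1. -/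
open Matrix Set Module

open Matrix Module

section aux

variable {m n : ℕ}

lemma aux_vecMulVec_rank_le_one (x : Fin m → ℝ) (u : Fin n → ℝ) :
    (vecMulVec x u).rank ≤ 1 := by
  classical
  have hle : LinearMap.range (vecMulVec x u).mulVecLin ≤ Submodule.span ℝ {x} := by
    rintro y ⟨v, rfl⟩
    have hv : (vecMulVec x u).mulVec v = (u ⬝ᵥ v) • x := by
      ext i
      show ∑ k, x i * u k * v k = (∑ k, u k * v k) * x i
      rw [Finset.sum_mul]
      exact Finset.sum_congr rfl fun k _ => by ring
    rw [mulVecLin_apply, hv]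
    exact Submodule.smul_mem _ _ (Submodule.mem_span_singleton_self x)
  by_cases hx : x = 0
  · subst hx
    have : Submodule.span ℝ ({0} : Set (Fin m → ℝ)) = ⊥ := Submodule.span_zero_singleton ℝ
    rw [this] at hle
    have : (vecMulVec (0 : Fin m → ℝ) u).rank = 0 := by
      unfold Matrix.rank
      rw [le_bot_iff.mp hle]
      simp
    omega
  · calc (vecMulVec x u).rank ≤ finrank ℝ (Submodule.span ℝ ({x} : Set (Fin m → ℝ))) :=
        Submodule.finrank_mono hle
      _ = 1 := finrank_span_singleton hx

lemma aux_rank_pos (M : Matrix (Fin m) (Fin n) ℝ) (hM : M ≠ 0) : 1 ≤ M.rank := by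
  classical
  by_contra h
  have h0 : M.rank = 0 := by omega
  apply hM
  unfold Matrix.rank at h0
  rw [Submodule.finrank_eq_zero] at h0
  ext i k
  have : M.mulVecLin (Pi.single k 1) ∈ LinearMap.range M.mulVecLin := ⟨_, rfl⟩
  rw [h0, Submodule.mem_bot] at this
  have := congrFun this i
  simpa using this

lemma aux_minors (M : Matrix (Fin m) (Fin n) ℝ) (h : M.rank ≤ 1) :
    ∀ i j k l, M i k * M j l = M i l * M j k := by
  classical
  intro i j k l
  set ck : Fin m → ℝ := fun i => M i k with hck
  set cl : Fin m → ℝ := fun i => M i l with hcl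
  have hdep : ¬ LinearIndependent ℝ ![ck, cl] := by
    intro hli
    have hsp : Submodule.span ℝ (Set.range ![ck, cl]) ≤ LinearMap.range M.mulVecLin := by
      rw [Submodule.span_le]
      rintro y ⟨a, rfl⟩
      fin_cases a
      · exact ⟨Pi.single k 1, by ext i; simp [hck, mulVecLin_apply]⟩
      · exact ⟨Pi.single l 1, by ext i; simp [hcl, mulVecLin_apply]⟩
    have h2 : finrank ℝ (Submodule.span ℝ (Set.range ![ck, cl])) = 2 := by
      rw [finrank_span_eq_card hli]
      simp
    have := Submodule.finrank_mono (s := Submodule.span ℝ (Set.range ![ck, cl]))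
      (t := LinearMap.range M.mulVecLin) hsp
    rw [h2] at this
    unfold Matrix.rank at h
    omega
  rw [LinearIndependent.pair_iff] at hdep
  push_neg at hdep
  obtain ⟨s, t, hst, hst0⟩ := hdep
  have hi := congrFun hst i
  have hj := congrFun hst j
  simp only [Pi.add_apply, Pi.smul_apply, Pi.zero_apply, smul_eq_mul, hck, hcl] at hi hj
  by_cases hs : s ≠ 0
  · have key : s * (M i k * M j l - M i l * M j k) = 0 := by
      linear_combination M j l * hi - M i l * hj
    have := mul_eq_zero.mp key
    rcases this with h' | h'
    · exact absurd h' hs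
    · linarith
  · have key : t * (M i k * M j l - M i l * M j k) = 0 := by
      linear_combination M i k * hj - M j k * hi
    have := mul_eq_zero.mp key
    rcases this with h' | h'
    · exact absurd h' (hst0 (by push_neg at hs; exact hs))
    · linarith

lemma aux_decomp (M : Matrix (Fin m) (Fin n) ℝ) (hM : M ≠ 0)
    (h : ∀ i j k l, M i k * M j l = M i l * M j k) :
    ∃ (x : Fin m → ℝ) (u : Fin n → ℝ), x ≠ 0 ∧ u ≠ 0 ∧ M = vecMulVec x u := by
  have : ∃ i k, M i k ≠ 0 := by
    by_contra hc
    push_neg at hc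
    exact hM (by ext i k; simpa using hc i k)
  obtain ⟨i₀, k₀, h0⟩ := this
  refine ⟨fun i => M i k₀, fun k => M i₀ k / M i₀ k₀, ?_, ?_, ?_⟩
  · intro hx
    exact h0 (by simpa using congrFun hx i₀)
  · intro hu
    have := congrFun hu k₀
    simp only [Pi.zero_apply] at this
    rw [div_eq_zero_iff] at this
    tauto
  · ext i k
    rw [vecMulVec_apply]
    field_simp
    linear_combination h i i₀ k k₀

lemma aux_rank_le_one_of_minors (M : Matrix (Fin m) (Fin n) ℝ)
    (h : ∀ i j k l, M i k * M j l = M i l * M j k) : M.rank ≤ 1 := by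
  by_cases hM : M = 0
  · subst hM; simp [Matrix.rank_zero]
  · obtain ⟨x, u, -, -, rfl⟩ := aux_decomp M hM h
    exact aux_vecMulVec_rank_le_one x u

end aux

section main
variable {n m : ℕ}

lemma aux_semipos (w : Fin m → ℝ) (hw : ∀ i, 0 < w i) (u : Fin n → ℝ) (j₀ : Fin n)
    (hu : 0 < u j₀) : Semipos (vecMulVec w u) := by
  classical
  set S := ∑ j, u j with hS
  set ε := u j₀ / (2 * (1 + |S|)) with hε
  have habs : (0:ℝ) ≤ |S| := abs_nonneg S
  have hεpos : 0 < ε := by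
    apply div_pos hu; positivity
  have h1 : ε * (2 * (1 + |S|)) = u j₀ := by
    rw [hε]; field_simp
  have hsum : ∑ k, u k * (ε + (if k = j₀ then 1 else 0)) = ε * S + u j₀ := by
    simp only [mul_add, Finset.sum_add_distrib, mul_ite, mul_one, mul_zero]
    rw [Finset.sum_ite_eq' Finset.univ j₀ u]
    simp [hS, Finset.sum_mul, mul_comm]
  have hkey : 0 < ε * S + u j₀ := by
    nlinarith [mul_le_mul_of_nonneg_left (neg_abs_le S) hεpos.le]
  refine ⟨fun j => ε + (if j = j₀ then 1 else 0), fun j => ?_, fun i => ?_⟩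
  · by_cases h : j = j₀ <;> simp [h] <;> linarith
  · have hmv : (vecMulVec w u).mulVec (fun j => ε + (if j = j₀ then 1 else 0)) i
        = w i * (ε * S + u j₀) := by
      show ∑ k, w i * u k * (ε + (if k = j₀ then 1 else 0)) = _
      rw [← hsum, Finset.mul_sum]
      exact Finset.sum_congr rfl fun k _ => by ring
    rw [hmv]
    exact mul_pos (hw i) hkey

lemma aux_key
    (L : Matrix (Fin m) (Fin n) ℝ →ₗ[ℝ] Matrix (Fin m) (Fin n) ℝ)
    (hL : Function.Injective L)
    (hrank : ∀ A : Matrix (Fin m) (Fin n) ℝ, Semipos A → A.rank = 1 → (L A).rank = 1)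
    (x : Fin m → ℝ) (hx : x ≠ 0) (u : Fin n → ℝ) (j₀ : Fin n) (hu : 0 < u j₀) :
    (L (vecMulVec x u)).rank = 1 := by
  classical
  obtain ⟨i₀, hi₀⟩ : ∃ i, x i ≠ 0 := Function.ne_iff.mp hx
  set s₀ : ℝ := 1 + ∑ i, |x i| with hs₀
  have hxs : ∀ s, s₀ ≤ s → ∀ i, 0 < x i + s := by
    intro s hs i
    have h1 : |x i| ≤ ∑ i, |x i| :=
      Finset.single_le_sum (fun i _ => abs_nonneg (x i)) (Finset.mem_univ i)
    have h2 := neg_abs_le (x i)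
    rw [hs₀] at hs
    linarith
  set C : Matrix (Fin m) (Fin n) ℝ := vecMulVec (fun _ => (1:ℝ)) u with hC
  have hBdecomp : ∀ s : ℝ, vecMulVec (fun i => x i + s) u = vecMulVec x u + s • C := by
    intro s
    ext i k
    simp [hC, vecMulVec_apply, Matrix.add_apply, Matrix.smul_apply]
    ring
  have hB1 : ∀ s, s₀ ≤ s → (vecMulVec (fun i => x i + s) u).rank = 1 := by
    intro s hs
    refine le_antisymm (aux_vecMulVec_rank_le_one _ _) (aux_rank_pos _ ?_)
    intro h0
    have := congrFun (congrFun h0 i₀) j₀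
    rw [vecMulVec_apply] at this
    simp only [Matrix.zero_apply] at this
    have h1 := hxs s hs i₀
    nlinarith
  have hmin : ∀ s, s₀ ≤ s → ∀ i j k l,
      (L (vecMulVec x u) + s • L C) i k * (L (vecMulVec x u) + s • L C) j l =
      (L (vecMulVec x u) + s • L C) i l * (L (vecMulVec x u) + s • L C) j k := by
    intro s hs
    have hsemi : Semipos (vecMulVec (fun i => x i + s) u) :=
      aux_semipos _ (hxs s hs) u j₀ hu
    have hr : (L (vecMulVec (fun i => x i + s) u)).rank = 1 :=
      hrank _ hsemi (hB1 s hs)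
    have heq : L (vecMulVec (fun i => x i + s) u) = L (vecMulVec x u) + s • L C := by
      rw [hBdecomp s, map_add, L.map_smul]
    rw [heq] at hr
    exact aux_minors _ hr.le
  set D := L (vecMulVec x u) with hD
  set C' := L C with hC'
  have hminD : ∀ i j k l, D i k * D j l = D i l * D j k := by
    intro i j k l
    have e1 := hmin s₀ le_rfl i j k l
    have e2 := hmin (s₀ + 1) (by linarith) i j k l
    have e3 := hmin (s₀ + 2) (by linarith) i j k l
    simp only [Matrix.add_apply, Matrix.smul_apply, smul_eq_mul] at e1 e2 e3
    linear_combination ((s₀+1)*(s₀+2)/2) * e1 - (s₀*(s₀+2)) * e2 + (s₀*(s₀+1)/2) * e3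
  have hle : D.rank ≤ 1 := aux_rank_le_one_of_minors D hminD
  have hne : D ≠ 0 := by
    intro h0
    have hA0 : vecMulVec x u = 0 := by
      apply hL
      rw [map_zero, ← hD, h0]
    have := congrFun (congrFun hA0 i₀) j₀
    rw [vecMulVec_apply] at this
    simp only [Matrix.zero_apply] at this
    rcases mul_eq_zero.mp this with h' | h'
    · exact hi₀ h'
    · exact hu.ne' h'
  have := aux_rank_pos D hne
  omega

end main

theorem stmt_19 {n m : ℕ}
    (L : Matrix (Fin m) (Fin n) ℝ →ₗ[ℝ] Matrix (Fin m) (Fin n) ℝ)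
    (hL : Function.Bijective L)
    (hpres : ∀ A : Matrix (Fin m) (Fin n) ℝ, Semipos A → Semipos (L A))
    (hrank : ∀ A : Matrix (Fin m) (Fin n) ℝ, Semipos A → A.rank = 1 →
      (L A).rank = 1) :
    ∀ A : Matrix (Fin m) (Fin n) ℝ, A.rank = 1 → (L A).rank = 1 := by
  intro A hA
  have hA0 : A ≠ 0 := by
    intro h
    rw [h, Matrix.rank_zero] at hA
    exact one_ne_zero hA.symm
  obtain ⟨x, u, hx, hu, rfl⟩ := aux_decomp A hA0 (aux_minors A hA.le)
  obtain ⟨j₁, hj₁⟩ : ∃ j, u j ≠ 0 := Function.ne_iff.mp hu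
  rcases lt_or_gt_of_ne hj₁ with h | h
  · have heq : vecMulVec x u = vecMulVec (-x) (-u) := by
      ext i k
      simp only [vecMulVec_apply, Pi.neg_apply]
      ring
    rw [heq]
    exact aux_key L hL.injective hrank (-x) (neg_ne_zero.mpr hx) (-u) j₁ (by simpa using h)
  · exact aux_key L hL.injective hrank x hx u j₁ h
end
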